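/- Let E ∈ R^{d×n} and k ≥ 1. If ŵ maximizes w ↦ wᵀEᵀEw over the set S_k = {w ∈ R^n : ‖w‖₂ = 1, ‖w‖₀ ≤ k} (which is nonempty and compact, so a maximizer exists), then for any (d, α) with ‖d‖₂ = 1 and ‖α‖₀ ≤ k, we have ‖E − (Eŵ/‖Eŵ‖₂)(‖Eŵ‖₂ŵ)ᵀ‖_F² ≤ ‖E − dαᵀ‖_F², provided Eŵ ≠ 0. -/

import Mathlib

open Matrix BigOperators

/-
Expanding the square, `‖E - u aᵀ‖_F² = ‖E‖_F² - 2 uᵀ E a + ‖u‖² ‖a‖²`, and the candidate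
`(Eŵ/‖Eŵ‖)(‖Eŵ‖ŵ)ᵀ` is just `(Eŵ) ŵᵀ`, with value `‖E‖_F² - ‖Eŵ‖²`. For a unit `u` and a
`k`-sparse `a`, Cauchy–Schwarz and the maximality of `ŵ` (applied to `a / ‖a‖`) give
`uᵀ E a ≤ ‖E a‖ ≤ ‖a‖ ‖Eŵ‖`, and `2 ‖a‖ ‖Eŵ‖ ≤ ‖a‖² + ‖Eŵ‖²` finishes the comparison.
-/

noncomputable def frob2 {d n : ℕ} (M : Matrix (Fin d) (Fin n) ℝ) : ℝ :=
  ∑ i, ∑ j, (M i j) ^ 2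

noncomputable def enorm {n : ℕ} (v : Fin n → ℝ) : ℝ :=
  Real.sqrt (∑ i, v i ^ 2)

noncomputable def spars {n : ℕ} (v : Fin n → ℝ) : ℕ :=
  Nat.card {i : Fin n // v i ≠ 0}

lemma dotProduct_transpose_mul_self_mulVec {R m n : Type*} [CommRing R] [Fintype m] [Fintype n]
    (E : Matrix m n R) (v : n → R) :
    v ⬝ᵥ (Eᵀ * E) *ᵥ v = ∑ i, (E *ᵥ v) i ^ 2 := by
  rw [← mulVec_mulVec, dotProduct_mulVec, vecMul_transpose]
  simp [dotProduct, sq]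

lemma sum_sq_smul {R ι : Type*} [CommSemiring R] [Fintype ι] (c : R) (v : ι → R) :
    ∑ i, (c • v) i ^ 2 = c ^ 2 * ∑ i, v i ^ 2 := by
  simp only [Pi.smul_apply, smul_eq_mul, mul_pow, Finset.mul_sum]

lemma eq_zero_of_sum_sq_eq_zero {R ι : Type*} [CommRing R] [LinearOrder R] [IsStrictOrderedRing R]
    [Fintype ι] {v : ι → R} (h : ∑ i, v i ^ 2 = 0) : v = 0 := by
  rw [← dotProduct_self_eq_zero]
  simpa [dotProduct, sq] using h

lemma frob2_sub_vecMulVec {d n : ℕ} (E : Matrix (Fin d) (Fin n) ℝ) (u : Fin d → ℝ)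
    (a : Fin n → ℝ) :
    frob2 (E - vecMulVec u a) =
      frob2 E - 2 * ∑ i, u i * (E *ᵥ a) i + (∑ i, u i ^ 2) * ∑ j, a j ^ 2 := by
  have hcross : ∑ i, u i * (E *ᵥ a) i = ∑ i, ∑ j, u i * (E i j * a j) := by
    simp only [mulVec, dotProduct, Finset.mul_sum]
  rw [frob2, frob2, hcross, Finset.sum_mul_sum, Finset.mul_sum, ← Finset.sum_sub_distrib,
    ← Finset.sum_add_distrib]
  refine Fintype.sum_congr _ _ fun i => ?_
  rw [Finset.mul_sum, ← Finset.sum_sub_distrib, ← Finset.sum_add_distrib]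
  refine Fintype.sum_congr _ _ fun j => ?_
  simp only [Matrix.sub_apply, vecMulVec_apply]
  ring

lemma vecMulVec_div_enorm {d n : ℕ} (v : Fin d → ℝ) (w : Fin n → ℝ) :
    vecMulVec (fun i => v i / _root_.enorm v) (fun j => _root_.enorm v * w j) = vecMulVec v w := by
  by_cases hv : _root_.enorm v = 0
  · have hv0 : v = 0 :=
      eq_zero_of_sum_sq_eq_zero <| le_antisymm (Real.sqrt_eq_zero'.mp hv) <|
        Finset.sum_nonneg fun i _ => sq_nonneg (v i)
    ext i j
    simp [hv0, vecMulVec_apply]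
  · ext i j
    simp only [vecMulVec_apply]
    field_simp

lemma spars_smul {n : ℕ} {c : ℝ} (hc : c ≠ 0) (v : Fin n → ℝ) : spars (c • v) = spars v :=
  Nat.card_congr <| Equiv.subtypeEquivRight fun i => by simp [hc]

lemma sum_sq_mulVec_le_of_forall_unit_sparse {d n k : ℕ} {E : Matrix (Fin d) (Fin n) ℝ} {M : ℝ}
    (hmax : ∀ v : Fin n → ℝ, ∑ i, v i ^ 2 = 1 → spars v ≤ k → ∑ i, (E *ᵥ v) i ^ 2 ≤ M)
    {a : Fin n → ℝ} (ha : spars a ≤ k) :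
    ∑ i, (E *ᵥ a) i ^ 2 ≤ (∑ j, a j ^ 2) * M := by
  set A := ∑ j, a j ^ 2
  by_cases hA : A = 0
  · simp [eq_zero_of_sum_sq_eq_zero hA, hA]
  have hA_pos : 0 < A :=
    lt_of_le_of_ne (Finset.sum_nonneg fun j _ => sq_nonneg (a j)) (Ne.symm hA)
  set c := (Real.sqrt A)⁻¹
  have hc : c ≠ 0 := inv_ne_zero (Real.sqrt_pos.mpr hA_pos).ne'
  have hc_sq : c ^ 2 * A = 1 := by
    rw [inv_pow, Real.sq_sqrt hA_pos.le, inv_mul_cancel₀ hA]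
  have hscaled := hmax (c • a) (by rw [sum_sq_smul, hc_sq]) (by rwa [spars_smul hc])
  rw [mulVec_smul, sum_sq_smul] at hscaled
  calc ∑ i, (E *ᵥ a) i ^ 2 = A * (c ^ 2 * ∑ i, (E *ᵥ a) i ^ 2) := by
        rw [← mul_assoc, mul_comm A, hc_sq, one_mul]
    _ ≤ A * M := mul_le_mul_of_nonneg_left hscaled hA_pos.le

lemma two_mul_sum_mul_le_add {ι : Type*} [Fintype ι] {u x : ι → ℝ} {A F : ℝ}
    (hu : ∑ i, u i ^ 2 = 1) (hx : ∑ i, x i ^ 2 ≤ A * F) (hA : 0 ≤ A) (hF : 0 ≤ F) :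
    2 * ∑ i, u i * x i ≤ A + F := by
  have hcs := Finset.sum_mul_sq_le_sq_mul_sq Finset.univ u x
  rw [hu, one_mul] at hcs
  have hsq : (2 * ∑ i, u i * x i) ^ 2 ≤ (A + F) ^ 2 := by
    nlinarith [sq_nonneg (A - F)]
  exact (le_abs_self _).trans (abs_le_of_sq_le_sq hsq (add_nonneg hA hF))

theorem stmt15_general (d n k : ℕ) (E : Matrix (Fin d) (Fin n) ℝ)
    (w : Fin n → ℝ) (hw : ∑ i, w i ^ 2 = 1)
    (hmax : ∀ v : Fin n → ℝ, ∑ i, v i ^ 2 = 1 → spars v ≤ k →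
        v ⬝ᵥ (Eᵀ * E).mulVec v ≤ w ⬝ᵥ (Eᵀ * E).mulVec w) :
    ∀ (u : Fin d → ℝ) (a : Fin n → ℝ), ∑ i, u i ^ 2 = 1 → spars a ≤ k →
      frob2 (E - Matrix.vecMulVec (fun i => E.mulVec w i / _root_.enorm (E.mulVec w))
          (fun j => _root_.enorm (E.mulVec w) * w j)) ≤
        frob2 (E - Matrix.vecMulVec u a) := by
  intro u a hu ha
  simp only [dotProduct_transpose_mul_self_mulVec] at hmax
  have hEa := sum_sq_mulVec_le_of_forall_unit_sparse hmax ha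
  have hcross := two_mul_sum_mul_le_add hu hEa (Finset.sum_nonneg fun j _ => sq_nonneg (a j))
    (Finset.sum_nonneg fun i _ => sq_nonneg ((E *ᵥ w) i))
  rw [vecMulVec_div_enorm, frob2_sub_vecMulVec, frob2_sub_vecMulVec, hu, hw]
  simp only [← sq]
  linarith

theorem stmt15 (d n k : ℕ) (hk1 : 1 ≤ k) (hkn : k ≤ n) (E : Matrix (Fin d) (Fin n) ℝ)
    (w : Fin n → ℝ) (hw : ∑ i, w i ^ 2 = 1) (hws : spars w ≤ k)
    (hmax : ∀ v : Fin n → ℝ, ∑ i, v i ^ 2 = 1 → spars v ≤ k →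
        v ⬝ᵥ (Eᵀ * E).mulVec v ≤ w ⬝ᵥ (Eᵀ * E).mulVec w)
    (hEw : E.mulVec w ≠ 0) :
    ∀ (u : Fin d → ℝ) (a : Fin n → ℝ), ∑ i, u i ^ 2 = 1 → spars a ≤ k →
      frob2 (E - Matrix.vecMulVec (fun i => E.mulVec w i / _root_.enorm (E.mulVec w))
          (fun j => _root_.enorm (E.mulVec w) * w j)) ≤
        frob2 (E - Matrix.vecMulVec u a) :=
  stmt15_general d n k E w hw hmax
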